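/- arXiv:2312.16559 — 2 statements merged into one kernel-verified Lean document; each statement's English description precedes it below -/
import Mathlib

section
/- If the channel vectors {h_{gk} : k ∈ K_g, g ∈ G} ⊂ ℂ^L are linearly independent, then the gradients of the SINR constraint functions c_{gk}(W) = Σ_{i≠g} |h_{gk}ᴴ w_i|²/σ_{gk}² + 1 − |h_{gk}ᴴ w_g|²/(α_g σ_{gk}²) with respect to W are linearly independent at every W such that h_{gk}ᴴ w_g ≠ 0 for all g, k; i.e., LICQ holds for the QoS power-minimization problem. -/
/-- LICQ for the QoS power-minimization problem: if the channel vectors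
`{h_{gk}} ⊂ ℂ^L` are linearly independent, then at every beamforming matrix
`W = [w₁,…,w_G]` with `h_{gk}ᴴ·w_g ≠ 0` for all `g, k`, the gradients
`∇c_{gk}(W) = (2/σ_{gk}²)·h_{gk}·h_{gk}ᴴ·[w₁,…,(−1/α_g)·w_g,…,w_G]` of the SINR
constraints are linearly independent over `ℝ`. -/
theorem licq_qos {L G : ℕ} {K : Fin G → ℕ}
    (h : (Σ g : Fin G, Fin (K g)) → (Fin L → ℂ))
    (σsq : (Σ g : Fin G, Fin (K g)) → ℝ) (α : Fin G → ℝ)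
    (hσ : ∀ u, 0 < σsq u) (hα : ∀ g, 0 < α g)
    (hli : LinearIndependent ℂ h)
    (w : Fin G → (Fin L → ℂ))
    (hw : ∀ u : Σ g : Fin G, Fin (K g), (∑ l, starRingEnd ℂ (h u l) * w u.1 l) ≠ 0) :
    LinearIndependent ℝ
      (fun u : Σ g : Fin G, Fin (K g) =>
        (Matrix.of fun (l : Fin L) (i : Fin G) =>
          ((2 / σsq u : ℝ) : ℂ) * h u l * (∑ l', starRingEnd ℂ (h u l') * w i l') *
            (if i = u.1 then -((α u.1 : ℝ) : ℂ)⁻¹ else 1) :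
          Matrix (Fin L) (Fin G) ℂ)) := by
  rw [Fintype.linearIndependent_iff]
  intro c hc u₀
  -- coefficients for the h-family at column u₀.1
  set d : (Σ g : Fin G, Fin (K g)) → ℂ := fun u =>
    (c u : ℂ) * (((2 / σsq u : ℝ) : ℂ) * (∑ l', starRingEnd ℂ (h u l') * w u₀.1 l') *
      (if u₀.1 = u.1 then -((α u.1 : ℝ) : ℂ)⁻¹ else 1)) with hd
  have hsum : ∑ u, d u • h u = 0 := by
    funext l
    have := congrFun (congrFun hc l) u₀.1
    simp only [Finset.sum_apply, Pi.smul_apply, Matrix.smul_apply, Matrix.of_apply,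
      Pi.zero_apply, Matrix.zero_apply] at this ⊢
    rw [Matrix.sum_apply] at this
    rw [← this]
    apply Finset.sum_congr rfl
    intro u _
    simp only [hd, Matrix.smul_apply, Matrix.of_apply, Complex.real_smul, smul_eq_mul]
    ring
  have hzero := Fintype.linearIndependent_iff.mp hli d hsum u₀
  simp only [hd] at hzero
  rcases mul_eq_zero.mp hzero with h1 | h2
  · exact_mod_cast h1
  · exfalso
    rcases mul_eq_zero.mp h2 with h3 | h4
    · rcases mul_eq_zero.mp h3 with h5 | h6
      · have : (2 / σsq u₀ : ℝ) ≠ 0 := (div_pos two_pos (hσ u₀)).ne'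
        exact this (by exact_mod_cast h5)
      · exact hw u₀ h6
    · simp only [if_pos, if_true, neg_eq_zero, inv_eq_zero] at h4
      have : (α u₀.1 : ℝ) ≠ 0 := ne_of_gt (hα u₀.1)
      exact this (by exact_mod_cast h4)
end

section
/- If W* maximizes the unconstrained objective Σ_g ζ_g min_k log(1+γ̂_{gk}(W)) over nonzero W, then W° = √(P_t/Tr(W* W*ᴴ))·W* satisfies Tr(W° W°ᴴ) = P_t and achieves γ_{gk}(W°) = γ̂_{gk}(W*) for all g, k, where γ_{gk}(W) = |h_{gk}ᴴw_g|²/(Σ_{i≠g}|h_{gk}ᴴwᵢ|² + σ_{gk}²); hence W° is optimal for the power-constrained WSR problem. -/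
/-- The modified SINR `γ̂_{gk}(W)` with the power constraint absorbed into the noise. -/
noncomputable def gammaHat {L G : ℕ} {K : Fin G → ℕ}
    (h : (g : Fin G) → Fin (K g) → (Fin L → ℂ))
    (σsq : (g : Fin G) → Fin (K g) → ℝ) (Pt : ℝ)
    (W : Matrix (Fin L) (Fin G) ℂ) (g : Fin G) (k : Fin (K g)) : ℝ :=
  ‖∑ l, starRingEnd ℂ (h g k l) * W l g‖ ^ 2 /
    ((∑ i, if i = g then 0 else ‖∑ l, starRingEnd ℂ (h g k l) * W l i‖ ^ 2)
      + σsq g k / Pt * ∑ l, ∑ i, ‖W l i‖ ^ 2)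

/-- The ordinary SINR `γ_{gk}(W) = |h_{gk}ᴴw_g|²/(Σ_{i≠g}|h_{gk}ᴴwᵢ|² + σ_{gk}²)`. -/
noncomputable def gammaSINR {L G : ℕ} {K : Fin G → ℕ}
    (h : (g : Fin G) → Fin (K g) → (Fin L → ℂ))
    (σsq : (g : Fin G) → Fin (K g) → ℝ)
    (W : Matrix (Fin L) (Fin G) ℂ) (g : Fin G) (k : Fin (K g)) : ℝ :=
  ‖∑ l, starRingEnd ℂ (h g k l) * W l g‖ ^ 2 /
    ((∑ i, if i = g then 0 else ‖∑ l, starRingEnd ℂ (h g k l) * W l i‖ ^ 2)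
      + σsq g k)

/-!
`γ̂` is invariant under rescaling `W ↦ r • W` (numerator, interference and the power term
`Tr(WWᴴ)` all scale by `r²`), and it agrees with `γ` on the sphere `Tr(WWᴴ) = P_t`, while
`γ ≤ γ̂` inside the ball. Since the objective is monotone in the SINRs, the optimum of the
unconstrained `γ̂`-problem, transported to the sphere, dominates every feasible point of the
constrained problem.
-/

section Power

variable {m n : Type*} [Fintype m]

lemma sum_norm_sq_smul [Fintype n] (r : ℝ) (W : Matrix m n ℂ) :
    ∑ l, ∑ i, ‖(r • W) l i‖ ^ 2 = r ^ 2 * ∑ l, ∑ i, ‖W l i‖ ^ 2 := by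
  simp only [Matrix.smul_apply, norm_smul, mul_pow, Real.norm_eq_abs, sq_abs, Finset.mul_sum]

lemma sum_norm_sq_pos [Fintype n] {W : Matrix m n ℂ} (hW : W ≠ 0) :
    0 < ∑ l, ∑ i, ‖W l i‖ ^ 2 := by
  refine (Finset.sum_nonneg fun _ _ => Finset.sum_nonneg fun _ _ => by positivity).lt_of_ne' ?_
  contrapose! hW
  ext l i
  rw [Finset.sum_eq_zero_iff_of_nonneg fun _ _ => Finset.sum_nonneg fun _ _ => by positivity]
    at hW
  simpa using (Finset.sum_eq_zero_iff_of_nonneg fun _ _ => by positivity).1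
    (hW l (Finset.mem_univ l)) i (Finset.mem_univ i)

lemma norm_sq_sum_mul_smul (v : m → ℂ) (r : ℝ) (W : Matrix m n ℂ) (i : n) :
    ‖∑ l, v l * (r • W) l i‖ ^ 2 = r ^ 2 * ‖∑ l, v l * W l i‖ ^ 2 := by
  simp only [Matrix.smul_apply, mul_smul_comm, ← Finset.smul_sum, norm_smul, mul_pow,
    Real.norm_eq_abs, sq_abs]

end Power

section SINR

variable {L G : ℕ} {K : Fin G → ℕ} (h : (g : Fin G) → Fin (K g) → (Fin L → ℂ))
  {σsq : (g : Fin G) → Fin (K g) → ℝ} {Pt : ℝ}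

lemma interference_nonneg (W : Matrix (Fin L) (Fin G) ℂ) (g : Fin G) (k : Fin (K g)) :
    0 ≤ ∑ i, if i = g then 0 else ‖∑ l, starRingEnd ℂ (h g k l) * W l i‖ ^ 2 :=
  Finset.sum_nonneg fun _ _ => by split <;> positivity

lemma gammaSINR_nonneg {g : Fin G} {k : Fin (K g)} (hσ : 0 ≤ σsq g k)
    (W : Matrix (Fin L) (Fin G) ℂ) : 0 ≤ gammaSINR h σsq W g k :=
  div_nonneg (sq_nonneg _) (add_nonneg (interference_nonneg h W g k) hσ)

lemma gammaSINR_zero (g : Fin G) (k : Fin (K g)) : gammaSINR h σsq 0 g k = 0 := by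
  simp [gammaSINR]

lemma gammaHat_smul {r : ℝ} (hr : r ≠ 0) (W : Matrix (Fin L) (Fin G) ℂ) (g : Fin G)
    (k : Fin (K g)) : gammaHat h σsq Pt (r • W) g k = gammaHat h σsq Pt W g k := by
  have hinterference :
      (∑ i, if i = g then 0 else ‖∑ l, starRingEnd ℂ (h g k l) * (r • W) l i‖ ^ 2) =
        r ^ 2 * ∑ i, if i = g then 0 else ‖∑ l, starRingEnd ℂ (h g k l) * W l i‖ ^ 2 := by
    simp only [norm_sq_sum_mul_smul, Finset.mul_sum, mul_ite, mul_zero]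
  rw [gammaHat, gammaHat, norm_sq_sum_mul_smul, hinterference, sum_norm_sq_smul,
    mul_left_comm _ (r ^ 2), ← mul_add, mul_div_mul_left _ _ (pow_ne_zero 2 hr)]

lemma gammaSINR_eq_gammaHat {W : Matrix (Fin L) (Fin G) ℂ} (hPt : Pt ≠ 0)
    (hpow : ∑ l, ∑ i, ‖W l i‖ ^ 2 = Pt) (g : Fin G) (k : Fin (K g)) :
    gammaSINR h σsq W g k = gammaHat h σsq Pt W g k := by
  rw [gammaSINR, gammaHat, hpow, div_mul_cancel₀ _ hPt]

lemma gammaSINR_le_gammaHat {W : Matrix (Fin L) (Fin G) ℂ} (hW : W ≠ 0) (hPt : 0 < Pt)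
    (hpow : ∑ l, ∑ i, ‖W l i‖ ^ 2 ≤ Pt) {g : Fin G} {k : Fin (K g)} (hσ : 0 < σsq g k) :
    gammaSINR h σsq W g k ≤ gammaHat h σsq Pt W g k := by
  have hnoise : σsq g k / Pt * ∑ l, ∑ i, ‖W l i‖ ^ 2 ≤ σsq g k := by
    rw [div_mul_eq_mul_div, div_le_iff₀ hPt]
    exact mul_le_mul_of_nonneg_left hpow hσ.le
  refine div_le_div_of_nonneg_left (sq_nonneg _) ?_ (by gcongr)
  exact add_pos_of_nonneg_of_pos (interference_nonneg h W g k)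
    (mul_pos (div_pos hσ hPt) (sum_norm_sq_pos hW))

end SINR

noncomputable def weightedMinRate {ι : Type*} [Fintype ι] {κ : ι → Type*} (ζ : ι → ℝ)
    (γ : (g : ι) → κ g → ℝ) : ℝ :=
  ∑ g, ζ g * ⨅ k, Real.log (1 + γ g k)

lemma weightedMinRate_mono {ι : Type*} [Fintype ι] {κ : ι → Type*} [∀ g, Finite (κ g)]
    {ζ : ι → ℝ} (hζ : ∀ g, 0 ≤ ζ g) {γ γ' : (g : ι) → κ g → ℝ} (hγ : ∀ g k, 0 ≤ γ g k)
    (hle : ∀ g k, γ g k ≤ γ' g k) : weightedMinRate ζ γ ≤ weightedMinRate ζ γ' := by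
  refine Finset.sum_le_sum fun g _ => mul_le_mul_of_nonneg_left ?_ (hζ g)
  refine ciInf_mono (Set.finite_range _).bddBelow fun k => ?_
  exact Real.log_le_log (by linarith [hγ g k]) (by linarith [hle g k])

theorem unconstrained_to_constrained_WSR_general {L G : ℕ} {K : Fin G → ℕ}
    (h : (g : Fin G) → Fin (K g) → (Fin L → ℂ))
    (σsq : (g : Fin G) → Fin (K g) → ℝ) (Pt : ℝ) (ζ : Fin G → ℝ)
    (hσ : ∀ g k, 0 < σsq g k) (hPt : 0 < Pt) (hζ : ∀ g, 0 < ζ g)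
    (Wstar : Matrix (Fin L) (Fin G) ℂ) (hWstar : Wstar ≠ 0)
    (hmax : ∀ W : Matrix (Fin L) (Fin G) ℂ, W ≠ 0 →
      (∑ g, ζ g * ⨅ k : Fin (K g), Real.log (1 + gammaHat h σsq Pt W g k)) ≤
      (∑ g, ζ g * ⨅ k : Fin (K g), Real.log (1 + gammaHat h σsq Pt Wstar g k)))
    (Wo : Matrix (Fin L) (Fin G) ℂ)
    (hWo : Wo = (Real.sqrt (Pt / ∑ l, ∑ i, ‖Wstar l i‖ ^ 2) : ℝ) • Wstar) :
    (∑ l, ∑ i, ‖Wo l i‖ ^ 2) = Pt ∧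
    (∀ (g : Fin G) (k : Fin (K g)),
      gammaSINR h σsq Wo g k = gammaHat h σsq Pt Wstar g k) ∧
    (∀ W : Matrix (Fin L) (Fin G) ℂ, (∑ l, ∑ i, ‖W l i‖ ^ 2) ≤ Pt →
      (∑ g, ζ g * ⨅ k : Fin (K g), Real.log (1 + gammaSINR h σsq W g k)) ≤
      (∑ g, ζ g * ⨅ k : Fin (K g), Real.log (1 + gammaSINR h σsq Wo g k))) := by
  have hratio : 0 < Pt / ∑ l, ∑ i, ‖Wstar l i‖ ^ 2 := div_pos hPt (sum_norm_sq_pos hWstar)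
  have hpow : ∑ l, ∑ i, ‖Wo l i‖ ^ 2 = Pt := by
    rw [hWo, sum_norm_sq_smul, Real.sq_sqrt hratio.le,
      div_mul_cancel₀ _ (sum_norm_sq_pos hWstar).ne']
  have hsinr (g : Fin G) (k : Fin (K g)) :
      gammaSINR h σsq Wo g k = gammaHat h σsq Pt Wstar g k := by
    rw [gammaSINR_eq_gammaHat h hPt.ne' hpow, hWo,
      gammaHat_smul h (Real.sqrt_ne_zero'.2 hratio)]
  refine ⟨hpow, hsinr, fun W hW => ?_⟩
  have hζ' (g : Fin G) : 0 ≤ ζ g := (hζ g).le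
  rcases eq_or_ne W 0 with rfl | hW0
  · refine weightedMinRate_mono hζ' (fun g k => (gammaSINR_zero h g k).ge) fun g k => ?_
    rw [gammaSINR_zero]
    exact gammaSINR_nonneg h (hσ g k).le Wo
  calc weightedMinRate ζ (gammaSINR h σsq W)
      ≤ weightedMinRate ζ (gammaHat h σsq Pt W) :=
        weightedMinRate_mono hζ' (fun g k => gammaSINR_nonneg h (hσ g k).le W)
          fun g k => gammaSINR_le_gammaHat h hW0 hPt hW (hσ g k)
    _ ≤ weightedMinRate ζ (gammaHat h σsq Pt Wstar) := hmax W hW0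
    _ = weightedMinRate ζ (gammaSINR h σsq Wo) := by
      congr 1
      ext g k
      exact (hsinr g k).symm

/-- Proposition 3: if `W*` maximizes the unconstrained WSR objective built on `γ̂` over
nonzero `W`, then the rescaled `W° = √(P_t/Tr(W*W*ᴴ))·W*` meets the power budget with
equality, attains `γ_{gk}(W°) = γ̂_{gk}(W*)`, and is optimal for the power-constrained
WSR problem. -/
theorem unconstrained_to_constrained_WSR {L G : ℕ} {K : Fin G → ℕ}
    (h : (g : Fin G) → Fin (K g) → (Fin L → ℂ))
    (σsq : (g : Fin G) → Fin (K g) → ℝ) (Pt : ℝ) (ζ : Fin G → ℝ)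
    (hσ : ∀ g k, 0 < σsq g k) (hPt : 0 < Pt) (hζ : ∀ g, 0 < ζ g)
    (hK : ∀ g, 0 < K g)
    (Wstar : Matrix (Fin L) (Fin G) ℂ) (hWstar : Wstar ≠ 0)
    (hmax : ∀ W : Matrix (Fin L) (Fin G) ℂ, W ≠ 0 →
      (∑ g, ζ g * ⨅ k : Fin (K g), Real.log (1 + gammaHat h σsq Pt W g k)) ≤
      (∑ g, ζ g * ⨅ k : Fin (K g), Real.log (1 + gammaHat h σsq Pt Wstar g k)))
    (Wo : Matrix (Fin L) (Fin G) ℂ)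
    (hWo : Wo = (Real.sqrt (Pt / ∑ l, ∑ i, ‖Wstar l i‖ ^ 2) : ℝ) • Wstar) :
    (∑ l, ∑ i, ‖Wo l i‖ ^ 2) = Pt ∧
    (∀ (g : Fin G) (k : Fin (K g)),
      gammaSINR h σsq Wo g k = gammaHat h σsq Pt Wstar g k) ∧
    (∀ W : Matrix (Fin L) (Fin G) ℂ, (∑ l, ∑ i, ‖W l i‖ ^ 2) ≤ Pt →
      (∑ g, ζ g * ⨅ k : Fin (K g), Real.log (1 + gammaSINR h σsq W g k)) ≤
      (∑ g, ζ g * ⨅ k : Fin (K g), Real.log (1 + gammaSINR h σsq Wo g k))) :=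
  unconstrained_to_constrained_WSR_general h σsq Pt ζ hσ hPt hζ Wstar hWstar hmax Wo hWo
end
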